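/- arXiv:0903.3483 — 4 statements merged into one kernel-verified Lean document; each statement's English description precedes it below -/
import Mathlib

section
/- Let E be a nontrivial finite-dimensional real normed vector space and let V : E → E be a smooth (C^∞) vector field on E. Suppose there exists a natural number m such that for every smooth vector field W : E → E the m-fold iterated Lie bracket ad_V^m(W) = [V, [V, …, [V, W]…]] is identically zero on E. Then V = 0. -/
open VectorField

section Aux

variable {E : Type*} [NormedAddCommGroup E] [NormedSpace ℝ E]

/-- Auxiliary sequence of vector fields used in the proof. -/
noncomputable def adAux (V : E → E) (φ : E →L[ℝ] ℝ) (x0 : E) (m : ℕ) : ℕ → E → E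
  | 0 => fun _ => V x0
  | j + 1 => fun x => (((m - j : ℕ) : ℝ) * φ (V x)) • adAux V φ x0 m j x
      + φ (x - x0) • (fderiv ℝ (adAux V φ x0 m j) x (V x) - fderiv ℝ V x (adAux V φ x0 m j x))

lemma adAux_contDiff (V : E → E) (hV : ContDiff ℝ (⊤ : ℕ∞) V) (φ : E →L[ℝ] ℝ) (x0 : E) (m : ℕ) :
    ∀ j, ContDiff ℝ (⊤ : ℕ∞) (adAux V φ x0 m j) := by
  intro j
  induction j with
  | zero => exact contDiff_const
  | succ j ih =>
    have hφV : ContDiff ℝ (⊤ : ℕ∞) fun x => φ (V x) := φ.contDiff.comp hV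
    have hg : ContDiff ℝ (⊤ : ℕ∞) fun x => φ (x - x0) :=
      φ.contDiff.comp (contDiff_id.sub contDiff_const)
    have hDA : ContDiff ℝ (⊤ : ℕ∞) fun x => fderiv ℝ (adAux V φ x0 m j) x (V x) :=
      (ih.fderiv_right (by simp)).clm_apply hV
    have hDV : ContDiff ℝ (⊤ : ℕ∞) fun x => fderiv ℝ V x (adAux V φ x0 m j x) :=
      (hV.fderiv_right (by simp)).clm_apply ih
    exact ((contDiff_const.mul hφV).smul ih).add (hg.smul (hDA.sub hDV))

lemma adAux_apply_base (V : E → E) (φ : E →L[ℝ] ℝ) (x0 : E) (hφ : φ (V x0) = 1) (m : ℕ) :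
    ∀ j, adAux V φ x0 m j x0 = ((m.descFactorial j : ℕ) : ℝ) • V x0 := by
  intro j
  induction j with
  | zero => simp [adAux]
  | succ j ih =>
    simp only [adAux, ih, hφ, sub_self, map_zero, zero_smul, add_zero, mul_one, smul_smul]
    rw [Nat.descFactorial_succ]
    push_cast
    ring_nf

lemma lieBracket_pow_smul (V A : E → E) (hV : ContDiff ℝ (⊤ : ℕ∞) V) (hA : ContDiff ℝ (⊤ : ℕ∞) A)
    (φ : E →L[ℝ] ℝ) (x0 : E) (k : ℕ) :
    lieBracket ℝ V (fun x => φ (x - x0) ^ (k + 1) • A x) =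
      fun x => φ (x - x0) ^ k • ((((k + 1 : ℕ) : ℝ) * φ (V x)) • A x
        + φ (x - x0) • (fderiv ℝ A x (V x) - fderiv ℝ V x (A x))) := by
  funext x
  have hg : HasFDerivAt (fun x : E => φ (x - x0)) φ x := by
    simpa using ((φ.hasFDerivAt (x := x)).sub_const (φ x0))
  have hpow : HasFDerivAt (fun x : E => φ (x - x0) ^ (k + 1))
      ((((k + 1 : ℕ) : ℝ) * φ (x - x0) ^ k) • φ) x := by
    simpa [Function.comp_def] using (hasDerivAt_pow (k + 1) (φ (x - x0))).comp_hasFDerivAt x hg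
  have hW : HasFDerivAt (fun x => φ (x - x0) ^ (k + 1) • A x)
      (φ (x - x0) ^ (k + 1) • (fderiv ℝ A x)
        + ((((k + 1 : ℕ) : ℝ) * φ (x - x0) ^ k) • φ).smulRight (A x)) x :=
    hpow.smul (hA.differentiable (by simp) x).hasFDerivAt
  have hfd := hW.fderiv
  simp only [lieBracket, hfd]
  have hlin : fderiv ℝ V x (φ (x - x0) ^ (k + 1) • A x)
      = φ (x - x0) ^ (k + 1) • fderiv ℝ V x (A x) := map_smul _ _ _
  simp only [ContinuousLinearMap.add_apply, ContinuousLinearMap.smul_apply,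
    ContinuousLinearMap.smulRight_apply, smul_eq_mul]
  rw [hlin]
  push_cast
  module

end Aux

/-- Let `E` be a nontrivial finite-dimensional real normed vector space and
`V : E → E` a smooth vector field on `E`. If there is `m : ℕ` such that for every smooth vector
field `W : E → E` the `m`-fold iterated Lie bracket `ad_V^m (W) = [V, [V, …, [V, W]…]]` vanishes
identically, then `V = 0`. Here `[V, W] = VectorField.lieBracket ℝ V W`. -/
theorem vectorField_eq_zero_of_ad_nilpotent
    {E : Type*} [NormedAddCommGroup E] [NormedSpace ℝ E] [FiniteDimensional ℝ E] [Nontrivial E]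
    (V : E → E) (hV : ContDiff ℝ (⊤ : ℕ∞) V)
    (h : ∃ m : ℕ, ∀ W : E → E, ContDiff ℝ (⊤ : ℕ∞) W →
      (fun U : E → E => VectorField.lieBracket ℝ V U)^[m] W = 0) :
    V = 0 := by
  obtain ⟨m, hm⟩ := h
  funext x0
  by_contra hv
  have hv : V x0 ≠ 0 := hv
  -- choose a functional with `φ (V x0) = 1`
  obtain ⟨ψ, hψnorm, hψ⟩ := exists_dual_vector ℝ (V x0) (norm_ne_zero_iff.mpr hv)
  set φ : E →L[ℝ] ℝ := (‖V x0‖ : ℝ)⁻¹ • ψ with hφdef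
  have hφ1 : φ (V x0) = 1 := by
    simp only [hφdef, ContinuousLinearMap.smul_apply, hψ, smul_eq_mul]
    rw [RCLike.ofReal_real_eq_id]
    exact inv_mul_cancel₀ (norm_ne_zero_iff.mpr hv)
  -- the key identity
  have key : ∀ j ≤ m, (fun U : E → E => VectorField.lieBracket ℝ V U)^[j]
      (fun x => φ (x - x0) ^ m • V x0) = fun x => φ (x - x0) ^ (m - j) • adAux V φ x0 m j x := by
    intro j hj
    induction j with
    | zero => simp [adAux]
    | succ j ih =>
      have hj' : j ≤ m := Nat.le_of_succ_le hj
      have hlt : j < m := hj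
      rw [Function.iterate_succ_apply', ih hj']
      have hk : m - j = (m - (j + 1)) + 1 := by omega
      rw [hk, lieBracket_pow_smul V _ hV (adAux_contDiff V hV φ x0 m j) φ x0]
      have hco : ((m - (j + 1) + 1 : ℕ) : ℝ) = ((m - j : ℕ) : ℝ) := by
        norm_cast; omega
      funext x
      simp only [adAux, hco]
  have hW : ContDiff ℝ (⊤ : ℕ∞) fun x => φ (x - x0) ^ m • V x0 :=
    (((φ.contDiff.comp (contDiff_id.sub contDiff_const)).pow m).smul contDiff_const)
  have h0 := hm _ hW
  have h1 := key m le_rfl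
  rw [h0] at h1
  have h2 := congrFun h1 x0
  rw [adAux_apply_base V φ x0 hφ1 m m] at h2
  simp only [Nat.sub_self, pow_zero, one_smul, Pi.zero_apply] at h2
  have : ((m.descFactorial m : ℕ) : ℝ) ≠ 0 := by
    rw [Nat.descFactorial_self]
    exact_mod_cast m.factorial_ne_zero
  exact hv (by simpa [this] using h2.symm)
end

section
/- Let n be a natural number and let I be a Lie ideal of the Lie algebra gl(n, ℝ) of all real n × n matrices with the commutator bracket ⁅X, Y⁆ = XY − YX. If every element X of I is ad-nilpotent, i.e. the adjoint endomorphism ad X : gl(n, ℝ) → gl(n, ℝ), Y ↦ ⁅X, Y⁆, is nilpotent, then every element of I is a scalar matrix: for each X ∈ I there exists c ∈ ℝ with X = c • 1. -/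
/-!
With respect to the Frobenius inner product, `ad Xᴴ` is the adjoint of `ad X`, and a
nilpotent operator commuting with its adjoint is zero. For `X ∈ I` the element `⁅Xᴴ, X⁆` of `I`
is Hermitian, so its `ad` vanishes; being central and traceless, `⁅Xᴴ, X⁆ = 0`. Thus `X` is
normal, hence so is `ad X`, which forces `ad X = 0`: `X` is central, i.e. scalar.
-/

attribute [local instance 100] LieRing.ofAssociativeRing

open scoped InnerProductSpace

section InnerProductSpace

variable {𝕜 E : Type*} [RCLike 𝕜] [NormedAddCommGroup E] [InnerProductSpace 𝕜 E]

theorem LinearMap.IsSymmetric.eq_zero_of_isNilpotent {T : E →ₗ[𝕜] E} (hT : T.IsSymmetric)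
    (hn : IsNilpotent T) : T = 0 := by
  have ker_sq : ∀ x, T (T x) = 0 → T x = 0 := fun x hx ↦ by
    rw [← inner_self_eq_zero (𝕜 := 𝕜), hT, hx, inner_zero_right]
  have ker_pow : ∀ k x, (T ^ (k + 1)) x = 0 → T x = 0 := by
    intro k
    induction k with
    | zero => simp
    | succ k ih =>
      intro x hx
      rw [pow_succ', pow_succ', Module.End.mul_apply, Module.End.mul_apply] at hx
      exact ih x (by rw [pow_succ', Module.End.mul_apply]; exact ker_sq _ hx)
  obtain ⟨m, hm⟩ := hn
  ext x
  exact ker_pow m x (by rw [pow_succ, hm, zero_mul, LinearMap.zero_apply])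

/-- `S * T` is symmetric and nilpotent, hence zero, and `‖T x‖² = ⟪x, (S * T) x⟫`. -/
theorem LinearMap.eq_zero_of_isNilpotent_of_commute_adjoint {S T : E →ₗ[𝕜] E}
    (hST : ∀ x y, ⟪T x, y⟫_𝕜 = ⟪x, S y⟫_𝕜) (hc : Commute S T) (hn : IsNilpotent T) : T = 0 := by
  have hTS : ∀ x y, ⟪S x, y⟫_𝕜 = ⟪x, T y⟫_𝕜 := fun x y ↦ by
    rw [← inner_conj_symm, ← hST, inner_conj_symm]
  have hsymm : (S * T).IsSymmetric := fun x y ↦ by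
    rw [Module.End.mul_apply, Module.End.mul_apply, hTS, hST]
  have hST0 : S * T = 0 := hsymm.eq_zero_of_isNilpotent (hc.isNilpotent_mul_left hn)
  ext x
  rw [LinearMap.zero_apply, ← inner_self_eq_zero (𝕜 := 𝕜), hST, ← Module.End.mul_apply, hST0,
    LinearMap.zero_apply, inner_zero_right]

end InnerProductSpace

namespace Matrix

variable {n R : Type*} [Fintype n] [DecidableEq n]

theorem exists_eq_smul_one_of_ad_eq_zero [CommRing R] {X : Matrix n n R}
    (h : LieAlgebra.ad R (Matrix n n R) X = 0) : ∃ c : R, X = c • 1 := by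
  have hX : X ∈ Set.center (Matrix n n R) := Semigroup.mem_center_iff.mpr fun A ↦
    (sub_eq_zero.mp (LinearMap.congr_fun h A)).symm
  rw [center_eq_range] at hX
  obtain ⟨c, rfl⟩ := hX
  exact ⟨c, by rw [scalar_apply, smul_one_eq_diagonal]⟩

theorem eq_zero_of_ad_eq_zero_of_trace_eq_zero [CommRing R] [NoZeroDivisors R] [CharZero R]
    {X : Matrix n n R} (h : LieAlgebra.ad R (Matrix n n R) X = 0) (htr : X.trace = 0) : X = 0 := by
  obtain ⟨c, rfl⟩ := exists_eq_smul_one_of_ad_eq_zero h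
  cases isEmpty_or_nonempty n
  · exact Subsingleton.elim _ _
  rw [trace_smul, trace_one, smul_eq_zero, Nat.cast_eq_zero] at htr
  rw [htr.resolve_right Fintype.card_ne_zero, zero_smul]

theorem isHermitian_lie_conjTranspose_self [Ring R] [StarRing R] (X : Matrix n n R) :
    (⁅Xᴴ, X⁆ : Matrix n n R).IsHermitian := by
  simp [IsHermitian, Ring.lie_def]

section Frobenius

open scoped ComplexOrder

variable [RCLike R]

/-- The Frobenius inner product `⟪A, B⟫ = trace (B * Aᴴ)`. -/
noncomputable abbrev frobeniusInnerNormedAddCommGroup : NormedAddCommGroup (Matrix n n R) :=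
  toMatrixNormedAddCommGroup 1 PosDef.one

attribute [local instance] frobeniusInnerNormedAddCommGroup

noncomputable abbrev frobeniusInnerProductSpace : InnerProductSpace R (Matrix n n R) :=
  toMatrixInnerProductSpace 1 PosSemidef.one

attribute [local instance] frobeniusInnerProductSpace

theorem inner_lie_left (X A B : Matrix n n R) : ⟪⁅X, A⁆, B⟫_R = ⟪A, ⁅Xᴴ, B⁆⟫_R := by
  change trace (B * 1 * _ᴴ) = trace (_ * 1 * Aᴴ)
  simp only [Ring.lie_def, mul_one, conjTranspose_sub, conjTranspose_mul, mul_sub, sub_mul,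
    trace_sub, mul_assoc]
  rw [← mul_assoc B Aᴴ, trace_mul_comm (B * Aᴴ)]

theorem ad_eq_zero_of_commute_conjTranspose_of_isNilpotent {X : Matrix n n R}
    (hX : Commute Xᴴ X) (hn : IsNilpotent (LieAlgebra.ad R (Matrix n n R) X)) :
    LieAlgebra.ad R (Matrix n n R) X = 0 := by
  refine LinearMap.eq_zero_of_isNilpotent_of_commute_adjoint (S := LieAlgebra.ad R _ Xᴴ)
    (inner_lie_left X) ?_ hn
  rw [commute_iff_lie_eq, ← LieHom.map_lie, commute_iff_lie_eq.mp hX, map_zero]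

end Frobenius

end Matrix

open Matrix

/-- Let `I` be a Lie ideal of the Lie algebra `gl(n, ℝ)` of real `n × n`
matrices with the commutator bracket.  If every `X ∈ I` is ad-nilpotent, then every element
of `I` is a scalar matrix. -/
theorem lieIdeal_of_ad_nilpotent_elements_is_scalar
    (n : ℕ) (I : LieIdeal ℝ (Matrix (Fin n) (Fin n) ℝ))
    (h : ∀ X ∈ I, IsNilpotent (LieAlgebra.ad ℝ (Matrix (Fin n) (Fin n) ℝ) X)) :
    ∀ X ∈ I, ∃ c : ℝ, X = c • (1 : Matrix (Fin n) (Fin n) ℝ) := by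
  intro X hX
  have hnormal : Commute Xᴴ X := by
    rw [commute_iff_lie_eq]
    refine eq_zero_of_ad_eq_zero_of_trace_eq_zero ?_ ?_
    · refine ad_eq_zero_of_commute_conjTranspose_of_isNilpotent ?_ (h _ (I.lie_mem hX))
      rw [(isHermitian_lie_conjTranspose_self X).eq]
    · rw [Ring.lie_def, trace_sub, trace_mul_comm, sub_self]
  exact exists_eq_smul_one_of_ad_eq_zero
    (ad_eq_zero_of_commute_conjTranspose_of_isNilpotent hnormal (h X hX))
end

section
/- Let L be a ℤ-graded Lie algebra over ℝ whose grading is concentrated in degrees [−1, N], equipped with an Euler element ε ∈ L_0, i.e. ⁅ε, x⁆ = p • x for every p ∈ ℤ and every x ∈ L_p. Let ψ : L → L be a Lie algebra automorphism such that ψ(x) − x ∈ ⊕_{q ≥ p+2} L_q for every p and every x ∈ L_p, and let Y denote the component in L_2 of ψ(ε). Then for every p and every x ∈ L_p, the component in L_{p+2} of ψ(x) equals −(1/2) • ⁅Y, x⁆. -/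
/-!
Apply `ψ` to `⁅ε, x⁆ = p • x` and compare components of degree `p + 2`. Writing
`ψ ε = ε + Y + (higher)` and `ψ x = x + x₂ + (higher)` with `x₂` of degree `p + 2`, the left side
contributes `p • x₂`, while the right side contributes `(p + 2) • x₂` from `⁅ε, ψ x⁆` and `⁅Y, x⁆`
from the degree-2 part of `ψ ε - ε`; the bracket of the two error terms lies in degrees `≥ p + 4`.
Hence `⁅Y, x⁆ = -2 • x₂`.
-/

open DirectSum

namespace GradedLieAlgebra

variable {R M : Type*} [CommRing R] [AddCommGroup M] [Module R M] (𝓜 : ℤ → Submodule R M)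

def filtrationGE (m : ℤ) : Submodule R M := ⨆ q ∈ {q : ℤ | m ≤ q}, 𝓜 q

variable {𝓜}

theorem mem_filtrationGE_of_mem {m q : ℤ} (hq : m ≤ q) {x : M} (hx : x ∈ 𝓜 q) :
    x ∈ filtrationGE 𝓜 m :=
  le_iSup₂ (f := fun q (_ : q ∈ {q : ℤ | m ≤ q}) => 𝓜 q) q hq hx

theorem decompose_eq_zero_of_mem_filtrationGE [Decomposition 𝓜] {m r : ℤ} (hr : r < m) {z : M}
    (hz : z ∈ filtrationGE 𝓜 m) : (decompose 𝓜 z r : M) = 0 := by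
  have : filtrationGE 𝓜 m ≤ LinearMap.ker ((Submodule.subtype _).comp
      ((DirectSum.component R ℤ _ r).comp (decomposeLinearEquiv 𝓜).toLinearMap)) :=
    iSup₂_le fun q hq x hx => decompose_of_mem_ne 𝓜 hx (by simp at hq; omega)
  exact this hz

variable {L : Type*} [LieRing L] [LieAlgebra R L] {𝓛 : ℤ → Submodule R L}

theorem lie_mem_filtrationGE (hbr : ∀ p q : ℤ, ∀ x ∈ 𝓛 p, ∀ y ∈ 𝓛 q, ⁅x, y⁆ ∈ 𝓛 (p + q))
    {m n : ℤ} {u v : L} (hu : u ∈ filtrationGE 𝓛 m) (hv : v ∈ filtrationGE 𝓛 n) :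
    ⁅u, v⁆ ∈ filtrationGE 𝓛 (m + n) := by
  have hhom : filtrationGE 𝓛 m ≤ (filtrationGE 𝓛 (m + n)).comap
      ((LieModule.toEnd R L L : L →ₗ[R] Module.End R L).flip v) := by
    refine iSup₂_le fun q hq a ha => ?_
    have : filtrationGE 𝓛 n ≤ (filtrationGE 𝓛 (m + n)).comap (LieModule.toEnd R L L a) :=
      iSup₂_le fun q' hq' b hb =>
        mem_filtrationGE_of_mem (by simp at hq hq'; omega) (hbr q q' a ha b hb)
    exact this hv
  exact hhom hu

variable [Decomposition 𝓛]

theorem decompose_lie_of_mem_right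
    (hbr : ∀ p q : ℤ, ∀ x ∈ 𝓛 p, ∀ y ∈ 𝓛 q, ⁅x, y⁆ ∈ 𝓛 (p + q))
    {n p : ℤ} {x : L} (hx : x ∈ 𝓛 p) (u : L) :
    (decompose 𝓛 ⁅u, x⁆ (n + p) : L) = ⁅(decompose 𝓛 u n : L), x⁆ := by
  induction u using Decomposition.inductionOn 𝓛 with
  | zero => simp
  | @homogeneous q u =>
    obtain ⟨u, hu⟩ := u
    by_cases hq : q = n
    · subst hq
      rw [decompose_of_mem_same 𝓛 hu, decompose_of_mem_same 𝓛 (hbr q p u hu x hx)]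
    · rw [decompose_of_mem_ne 𝓛 hu hq, decompose_of_mem_ne 𝓛 (hbr q p u hu x hx) (by omega),
        zero_lie]
  | add a b ha hb =>
    simp only [add_lie, decompose_add, DirectSum.add_apply, Submodule.coe_add, ha, hb]

theorem decompose_lie_of_isEuler {ε : L} (hε : ∀ p : ℤ, ∀ x ∈ 𝓛 p, ⁅ε, x⁆ = p • x)
    (r : ℤ) (v : L) : (decompose 𝓛 ⁅ε, v⁆ r : L) = r • (decompose 𝓛 v r : L) := by
  induction v using Decomposition.inductionOn 𝓛 with
  | zero => simp
  | @homogeneous q v =>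
    obtain ⟨v, hv⟩ := v
    by_cases hq : q = r
    · subst hq
      rw [hε q v hv, decompose_of_mem_same 𝓛 (zsmul_mem hv q), decompose_of_mem_same 𝓛 hv]
    · rw [hε q v hv, decompose_of_mem_ne 𝓛 (zsmul_mem hv q) hq, decompose_of_mem_ne 𝓛 hv hq,
        smul_zero]
  | add a b ha hb =>
    simp only [lie_add, decompose_add, DirectSum.add_apply, Submodule.coe_add, ha, hb, smul_add]

theorem lie_decompose_two_eq_neg_two_smul
    (hbr : ∀ p q : ℤ, ∀ x ∈ 𝓛 p, ∀ y ∈ 𝓛 q, ⁅x, y⁆ ∈ 𝓛 (p + q))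
    {ε : L} (hε0 : ε ∈ 𝓛 0) (hε : ∀ p : ℤ, ∀ x ∈ 𝓛 p, ⁅ε, x⁆ = p • x) (ψ : L →ₗ⁅R⁆ L)
    (hψ : ∀ p : ℤ, ∀ x ∈ 𝓛 p, ψ x - x ∈ filtrationGE 𝓛 (p + 2)) {p : ℤ} {x : L}
    (hx : x ∈ 𝓛 p) :
    ⁅(decompose 𝓛 (ψ ε) 2 : L), x⁆ = (-2 : ℤ) • (decompose 𝓛 (ψ x) (p + 2) : L) := by
  set u := ψ ε - ε
  set v := ψ x - x
  have hu : u ∈ filtrationGE 𝓛 2 := by simpa using hψ 0 ε hε0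
  have huv : (decompose 𝓛 ⁅u, v⁆ (p + 2) : L) = 0 :=
    decompose_eq_zero_of_mem_filtrationGE (by omega) (lie_mem_filtrationGE hbr hu (hψ p x hx))
  have hu2 : (decompose 𝓛 u 2 : L) = decompose 𝓛 (ψ ε) 2 := by
    rw [decompose_sub, DirectSum.sub_apply, Submodule.coe_sub,
      decompose_of_mem_ne 𝓛 hε0 (by norm_num), sub_zero]
  have hlhs : (decompose 𝓛 (ψ ⁅ε, x⁆) (p + 2) : L) = p • (decompose 𝓛 (ψ x) (p + 2) : L) := by
    rw [hε p x hx, map_zsmul, ← Int.cast_smul_eq_zsmul R, decompose_smul, DirectSum.smul_apply,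
      Submodule.coe_smul, Int.cast_smul_eq_zsmul]
  have hrhs : (decompose 𝓛 ⁅ψ ε, ψ x⁆ (p + 2) : L) =
      (p + 2) • (decompose 𝓛 (ψ x) (p + 2) : L) + ⁅(decompose 𝓛 (ψ ε) 2 : L), x⁆ := by
    have hsplit : ⁅ψ ε, ψ x⁆ = ⁅ε, ψ x⁆ + ⁅u, x⁆ + ⁅u, v⁆ := by
      simp only [u, v, sub_lie, lie_sub]
      abel
    rw [hsplit, decompose_add, decompose_add, DirectSum.add_apply, DirectSum.add_apply,
      Submodule.coe_add, Submodule.coe_add, huv, add_zero, decompose_lie_of_isEuler hε,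
      add_comm p, decompose_lie_of_mem_right hbr hx, hu2]
  have hcompare := (LieHom.map_lie ψ ε x ▸ hlhs).symm.trans hrhs
  linear_combination (norm := module) -hcompare

end GradedLieAlgebra

open GradedLieAlgebra in
theorem second_component_of_filtered_automorphism_general
    {L : Type*} [LieRing L] [LieAlgebra ℝ L]
    (𝓛 : ℤ → Submodule ℝ L) [DirectSum.Decomposition 𝓛]
    (hbr : ∀ p q : ℤ, ∀ x ∈ 𝓛 p, ∀ y ∈ 𝓛 q, ⁅x, y⁆ ∈ 𝓛 (p + q))
    (ε : L) (hε0 : ε ∈ 𝓛 0) (hε : ∀ p : ℤ, ∀ x ∈ 𝓛 p, ⁅ε, x⁆ = p • x)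
    (ψ : L ≃ₗ⁅ℝ⁆ L)
    (hψ : ∀ p : ℤ, ∀ x ∈ 𝓛 p, ψ x - x ∈ ⨆ q ∈ {q : ℤ | p + 2 ≤ q}, 𝓛 q) :
    ∀ p : ℤ, ∀ x ∈ 𝓛 p,
      (DirectSum.decompose 𝓛 (ψ x) (p + 2) : L) =
        -(1 / 2 : ℝ) • ⁅(DirectSum.decompose 𝓛 (ψ ε) 2 : L), x⁆ := by
  intro p x hx
  have key : ⁅(DirectSum.decompose 𝓛 (ψ ε) 2 : L), x⁆ =
      (-2 : ℤ) • (DirectSum.decompose 𝓛 (ψ x) (p + 2) : L) :=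
    lie_decompose_two_eq_neg_two_smul hbr hε0 hε ψ.toLieHom hψ hx
  rw [key, ← Int.cast_smul_eq_zsmul ℝ, smul_smul]
  norm_num

/-- Let `L` be a `ℤ`-graded real Lie algebra (internal direct sum of
submodules `𝓛 p` with `⁅𝓛 p, 𝓛 q⁆ ⊆ 𝓛 (p + q)`), concentrated in degrees `[-1, N]`, with an
Euler element `ε ∈ 𝓛 0` (i.e. `⁅ε, x⁆ = p • x` for `x ∈ 𝓛 p`).  Let `ψ` be a Lie algebra
automorphism of `L` with `ψ x - x ∈ ⨆ (q ≥ p + 2), 𝓛 q` for all `x ∈ 𝓛 p`, and let `Y` be the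
component in `𝓛 2` of `ψ ε`.  Then for every `p` and every `x ∈ 𝓛 p`, the component in
`𝓛 (p + 2)` of `ψ x` equals `-(1/2) • ⁅Y, x⁆`. -/
theorem second_component_of_filtered_automorphism
    {L : Type*} [LieRing L] [LieAlgebra ℝ L]
    (𝓛 : ℤ → Submodule ℝ L) [DirectSum.Decomposition 𝓛]
    (hbr : ∀ p q : ℤ, ∀ x ∈ 𝓛 p, ∀ y ∈ 𝓛 q, ⁅x, y⁆ ∈ 𝓛 (p + q))
    (N : ℕ) (hsupp : ∀ p : ℤ, (p < -1 ∨ (N : ℤ) < p) → 𝓛 p = ⊥)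
    (ε : L) (hε0 : ε ∈ 𝓛 0) (hε : ∀ p : ℤ, ∀ x ∈ 𝓛 p, ⁅ε, x⁆ = p • x)
    (ψ : L ≃ₗ⁅ℝ⁆ L)
    (hψ : ∀ p : ℤ, ∀ x ∈ 𝓛 p, ψ x - x ∈ ⨆ q ∈ {q : ℤ | p + 2 ≤ q}, 𝓛 q) :
    ∀ p : ℤ, ∀ x ∈ 𝓛 p,
      (DirectSum.decompose 𝓛 (ψ x) (p + 2) : L) =
        -(1 / 2 : ℝ) • ⁅(DirectSum.decompose 𝓛 (ψ ε) 2 : L), x⁆ :=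
  second_component_of_filtered_automorphism_general 𝓛 hbr ε hε0 hε ψ hψ
end

section
/- Let L be a ℤ-graded Lie algebra over ℝ whose grading is concentrated in degrees [−1, N], equipped with an Euler element ε ∈ L_0, i.e. ⁅ε, x⁆ = p • x for every p ∈ ℤ and every x ∈ L_p, and assume L_{−1} ≠ 0. Let c be a nonzero real number and let X ∈ L be an element all of whose homogeneous components lie in even nonnegative degrees and whose component in L_0 equals c • ε. Then ad X is not a nilpotent endomorphism of L; indeed, for every nonzero y ∈ L_{−1} and every natural number m, the component in L_{−1} of (ad X)^m(y) equals (−c)^m • y, which is nonzero. -/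
/-!
Only the degree `0` component `c • ε` of `X` can move a vector of degree `-1` back into degree
`-1`: the other components of `X` have positive degree, and nothing lives below degree `-1`.
Hence projecting onto `𝓛 (-1)` intertwines `ad X` with multiplication by `-c`, so the
`𝓛 (-1)`-component of `(ad X) ^ m y` is `(-c) ^ m • y`, which never vanishes.
-/

open DirectSum

section GradedLie

variable {R L ι : Type*} [CommRing R] [LieRing L] [LieAlgebra R L]
  [DecidableEq ι] [AddRightCancelMonoid ι]
  {𝓛 : ι → Submodule R L} [Decomposition 𝓛]

theorem DirectSum.decompose_lie_add_of_right_mem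
    (hbr : ∀ p q : ι, ∀ x ∈ 𝓛 p, ∀ y ∈ 𝓛 q, ⁅x, y⁆ ∈ 𝓛 (p + q))
    (x : L) {z : L} {q : ι} (hz : z ∈ 𝓛 q) (p : ι) :
    (decompose 𝓛 ⁅x, z⁆ (p + q) : L) = ⁅(decompose 𝓛 x p : L), z⁆ := by
  induction x using Decomposition.inductionOn 𝓛 with
  | zero => simp
  | add x x' hx hx' => simp [add_lie, hx, hx']
  | @homogeneous i x =>
    by_cases hip : i = p
    · subst hip
      simp [decompose_of_mem_same 𝓛 (hbr i q _ x.2 z hz)]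
    · rw [decompose_of_mem_ne 𝓛 (hbr i q _ x.2 z hz) (fun h => hip (add_right_cancel h)),
        decompose_of_mem_ne 𝓛 x.2 hip, zero_lie]

end GradedLie

section EulerElement

variable {R L : Type*} [CommRing R] [LieRing L] [LieAlgebra R L]
  {𝓛 : ℤ → Submodule R L} [Decomposition 𝓛]

theorem decompose_lie_neg_one_of_nonneg
    (hbr : ∀ p q : ℤ, ∀ x ∈ 𝓛 p, ∀ y ∈ 𝓛 q, ⁅x, y⁆ ∈ 𝓛 (p + q))
    (hbot : ∀ p < -1, 𝓛 p = ⊥) {ε X : L} {c : R} (hε : ∀ y ∈ 𝓛 (-1), ⁅ε, y⁆ = -y)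
    (hneg : ∀ p < 0, decompose 𝓛 X p = 0) (hX0 : (decompose 𝓛 X 0 : L) = c • ε) (z : L) :
    (decompose 𝓛 ⁅X, z⁆ (-1) : L) = (-c) • (decompose 𝓛 z (-1) : L) := by
  induction z using Decomposition.inductionOn 𝓛 with
  | zero => simp
  | add z z' hz hz' => simp [lie_add, hz, hz', smul_add]
  | @homogeneous q z =>
    rw [show (-1 : ℤ) = (-1 - q) + q by ring, decompose_lie_add_of_right_mem hbr X z.2]
    rcases lt_trichotomy q (-1) with hq | rfl | hq
    · simp [(Submodule.eq_bot_iff _).mp (hbot q hq) z z.2]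
    · simp [hX0, hε z z.2]
    · rw [hneg _ (by omega), decompose_of_mem_ne 𝓛 z.2 (by omega)]
      simp

theorem decompose_ad_pow_apply_neg_one_of_nonneg
    (hbr : ∀ p q : ℤ, ∀ x ∈ 𝓛 p, ∀ y ∈ 𝓛 q, ⁅x, y⁆ ∈ 𝓛 (p + q))
    (hbot : ∀ p < -1, 𝓛 p = ⊥) {ε X : L} {c : R} (hε : ∀ y ∈ 𝓛 (-1), ⁅ε, y⁆ = -y)
    (hneg : ∀ p < 0, decompose 𝓛 X p = 0) (hX0 : (decompose 𝓛 X 0 : L) = c • ε)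
    (m : ℕ) (z : L) :
    (decompose 𝓛 ((LieAlgebra.ad R L X ^ m) z) (-1) : L) =
      (-c) ^ m • (decompose 𝓛 z (-1) : L) := by
  induction m with
  | zero => simp
  | succ m ih =>
    rw [pow_succ', Module.End.mul_apply, LieAlgebra.ad_apply,
      decompose_lie_neg_one_of_nonneg hbr hbot hε hneg hX0, ih, smul_smul, pow_succ']

end EulerElement

theorem euler_multiple_not_ad_nilpotent_general
    {L : Type*} [LieRing L] [LieAlgebra ℝ L]
    (𝓛 : ℤ → Submodule ℝ L) [DirectSum.Decomposition 𝓛]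
    (hbr : ∀ p q : ℤ, ∀ x ∈ 𝓛 p, ∀ y ∈ 𝓛 q, ⁅x, y⁆ ∈ 𝓛 (p + q))
    (N : ℕ) (hsupp : ∀ p : ℤ, (p < -1 ∨ (N : ℤ) < p) → 𝓛 p = ⊥)
    (ε : L) (hε : ∀ p : ℤ, ∀ x ∈ 𝓛 p, ⁅ε, x⁆ = p • x)
    (hne : 𝓛 (-1) ≠ ⊥)
    (c : ℝ) (hc : c ≠ 0) (X : L)
    (hXeven : ∀ p : ℤ, (¬ ∃ i : ℕ, p = 2 * (i : ℤ)) → DirectSum.decompose 𝓛 X p = 0)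
    (hX0 : (DirectSum.decompose 𝓛 X 0 : L) = c • ε) :
    ¬ IsNilpotent (LieAlgebra.ad ℝ L X) ∧
      ∀ y ∈ 𝓛 (-1), y ≠ 0 → ∀ m : ℕ,
        (DirectSum.decompose 𝓛 (((LieAlgebra.ad ℝ L X) ^ m) y) (-1) : L) = (-c) ^ m • y ∧
          (-c) ^ m • y ≠ 0 := by
  have hneg : ∀ p < 0, decompose 𝓛 X p = 0 := fun p hp =>
    hXeven p fun ⟨i, hi⟩ => by omega
  have hε' : ∀ y ∈ 𝓛 (-1), ⁅ε, y⁆ = -y := fun y hy => by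
    rw [hε (-1) y hy, neg_one_zsmul]
  have hcomp : ∀ y ∈ 𝓛 (-1), ∀ m : ℕ,
      (decompose 𝓛 ((LieAlgebra.ad ℝ L X ^ m) y) (-1) : L) = (-c) ^ m • y := fun y hy m => by
    rw [decompose_ad_pow_apply_neg_one_of_nonneg hbr (fun p hp => hsupp p (.inl hp)) hε' hneg
      hX0, decompose_of_mem_same 𝓛 hy]
  have hnz : ∀ y : L, y ≠ 0 → ∀ m : ℕ, (-c) ^ m • y ≠ 0 := fun y hy m =>
    smul_ne_zero (pow_ne_zero m (neg_ne_zero.mpr hc)) hy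
  refine ⟨?_, fun y hy hy0 m => ⟨hcomp y hy m, hnz y hy0 m⟩⟩
  rintro ⟨m, hm⟩
  obtain ⟨y, hy, hy0⟩ := (Submodule.ne_bot_iff _).mp hne
  apply hnz y hy0 m
  rw [← hcomp y hy m, hm]
  simp

/-- Let `L` be a `ℤ`-graded real Lie algebra (internal direct sum of
submodules `𝓛 p` with `⁅𝓛 p, 𝓛 q⁆ ⊆ 𝓛 (p + q)`), concentrated in degrees `[-1, N]`, with an
Euler element `ε ∈ 𝓛 0` and `𝓛 (-1) ≠ ⊥`.  Let `c ≠ 0` be real and let `X ∈ L` have all its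
homogeneous components in even nonnegative degrees, with component in `𝓛 0` equal to `c • ε`.
Then `ad X` is not nilpotent; indeed for every nonzero `y ∈ 𝓛 (-1)` and every `m : ℕ`, the
component in `𝓛 (-1)` of `(ad X) ^ m y` equals `(-c) ^ m • y`, which is nonzero. -/
theorem euler_multiple_not_ad_nilpotent
    {L : Type*} [LieRing L] [LieAlgebra ℝ L]
    (𝓛 : ℤ → Submodule ℝ L) [DirectSum.Decomposition 𝓛]
    (hbr : ∀ p q : ℤ, ∀ x ∈ 𝓛 p, ∀ y ∈ 𝓛 q, ⁅x, y⁆ ∈ 𝓛 (p + q))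
    (N : ℕ) (hsupp : ∀ p : ℤ, (p < -1 ∨ (N : ℤ) < p) → 𝓛 p = ⊥)
    (ε : L) (hε0 : ε ∈ 𝓛 0) (hε : ∀ p : ℤ, ∀ x ∈ 𝓛 p, ⁅ε, x⁆ = p • x)
    (hne : 𝓛 (-1) ≠ ⊥)
    (c : ℝ) (hc : c ≠ 0) (X : L)
    (hXeven : ∀ p : ℤ, (¬ ∃ i : ℕ, p = 2 * (i : ℤ)) → DirectSum.decompose 𝓛 X p = 0)
    (hX0 : (DirectSum.decompose 𝓛 X 0 : L) = c • ε) :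
    ¬ IsNilpotent (LieAlgebra.ad ℝ L X) ∧
      ∀ y ∈ 𝓛 (-1), y ≠ 0 → ∀ m : ℕ,
        (DirectSum.decompose 𝓛 (((LieAlgebra.ad ℝ L X) ^ m) y) (-1) : L) = (-c) ^ m • y ∧
          (-c) ^ m • y ≠ 0 :=
  euler_multiple_not_ad_nilpotent_general 𝓛 hbr N hsupp ε hε hne c hc X hXeven hX0
end
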